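/- The regular hexagon whose opposite sides are at distance 1 can be partitioned into three congruent pentagons each of circumradius √3/4; consequently, for every finite set P of n points of diameter at most 1, there exists a closed disc of radius √3/4 containing at least ⌈n/3⌉ points of P. -/

import Mathlib

open Metric Real
open scoped RealInnerProductSpace Classical

def regularHexagon : Set (EuclideanSpace ℝ (Fin 2)) :=
  {x | ∀ k : Fin 3, |⟪x, (WithLp.toLp 2 ![cos (k * π / 3), sin (k * π / 3)] : EuclideanSpace ℝ (Fin 2))⟫| ≤ 1 / 2}

lemma mem_hex (x : EuclideanSpace ℝ (Fin 2)) :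
    x ∈ regularHexagon ↔ |x 0| ≤ 1/2 ∧ |x 0 + Real.sqrt 3 * x 1| ≤ 1 ∧
      |(-(x 0)) + Real.sqrt 3 * x 1| ≤ 1 := by
  have hinner : ∀ (a b : ℝ), ⟪x, (WithLp.toLp 2 ![a,b] : EuclideanSpace ℝ (Fin 2))⟫ = x 0 * a + x 1 * b := by
    intro a b
    simp [PiLp.inner_apply, Fin.sum_univ_two, RCLike.inner_apply, mul_comm]
  have hc2 : Real.cos (2 * π / 3) = -(1/2) := by
    rw [show (2:ℝ) * π / 3 = π - π/3 by ring, Real.cos_pi_sub, Real.cos_pi_div_three]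
  have hs2 : Real.sin (2 * π / 3) = Real.sqrt 3 / 2 := by
    rw [show (2:ℝ) * π / 3 = π - π/3 by ring, Real.sin_pi_sub, Real.sin_pi_div_three]
  have key : x ∈ regularHexagon ↔
      (|x 0 * Real.cos 0 + x 1 * Real.sin 0| ≤ 1/2 ∧
       |x 0 * Real.cos (π/3) + x 1 * Real.sin (π/3)| ≤ 1/2 ∧
       |x 0 * Real.cos (2*π/3) + x 1 * Real.sin (2*π/3)| ≤ 1/2) := by
    constructor
    · intro h
      have h0 := h 0
      have h1 := h 1
      have h2 := h 2
      rw [hinner] at h0 h1 h2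
      refine ⟨?_, ?_, ?_⟩
      · convert h0 using 4 <;> norm_num
      · convert h1 using 4 <;> push_cast <;> norm_num
      · convert h2 using 4 <;> push_cast <;> norm_num
    · intro ⟨h0, h1, h2⟩ k
      rw [hinner]
      fin_cases k
      · simpa using h0
      · push_cast; simpa using h1
      · push_cast; exact h2
  rw [key, Real.cos_zero, Real.sin_zero, Real.cos_pi_div_three, Real.sin_pi_div_three, hc2, hs2]
  constructor
  · intro ⟨h0, h1, h2⟩
    refine ⟨by simpa using h0, ?_, ?_⟩ <;> rw [abs_le] at * <;> constructor <;>
      first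
      | linarith [h1.1, h1.2, h2.1, h2.2]
      | nlinarith [h1.1, h1.2, h2.1, h2.2]
  · intro ⟨h0, h1, h2⟩
    refine ⟨by simpa using h0, ?_, ?_⟩ <;> rw [abs_le] at * <;> constructor <;>
      nlinarith [h0.1, h0.2, h1.1, h1.2, h2.1, h2.2]

/-- key pentagon estimate -/
lemma pent {x y : ℝ} (h1 : |x| ≤ 1/2) (h2 : |x + Real.sqrt 3 * y| ≤ 1)
    (h3 : |(-x) + Real.sqrt 3 * y| ≤ 1) (h4 : |y| ≤ Real.sqrt 3 * x) :
    (x - 1/4)^2 + y^2 ≤ 3/16 := by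
  have hs : Real.sqrt 3 ^ 2 = 3 := Real.sq_sqrt (by norm_num)
  have hs1 : 1 ≤ Real.sqrt 3 := by nlinarith [Real.sqrt_nonneg 3]
  have h1' := abs_le.mp h1
  have h2' := abs_le.mp h2
  have h3' := abs_le.mp h3
  have h4' := abs_le.mp h4
  have hyabs : 0 ≤ |y| := abs_nonneg y
  have hx0 : 0 ≤ x := by nlinarith [le_trans hyabs h4]
  have hy2 : y^2 ≤ 3*x^2 := by nlinarith [h4'.1, h4'.2]
  have ha : 0 ≤ 1 - x - Real.sqrt 3 * y := by linarith [h2'.2]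
  have hb : 0 ≤ 1 - x + Real.sqrt 3 * y := by linarith [h3'.1]
  have hy3 : 3*y^2 ≤ (1-x)^2 := by nlinarith [mul_nonneg ha hb]
  rcases le_total x (1/4) with hx | hx
  · nlinarith [hy2, mul_nonneg (by linarith : (0:ℝ) ≤ 1/4 - x) (by linarith : (0:ℝ) ≤ x + 1/8)]
  · nlinarith [hy3, mul_nonneg (by linarith : (0:ℝ) ≤ x - 1/4) (by linarith : (0:ℝ) ≤ 5/8 - x),
      h1'.2]

noncomputable def centerA : EuclideanSpace ℝ (Fin 2) := WithLp.toLp 2 ![1/4, 0]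
noncomputable def centerB : EuclideanSpace ℝ (Fin 2) := WithLp.toLp 2 ![-(1/8), Real.sqrt 3/8]
noncomputable def centerC : EuclideanSpace ℝ (Fin 2) := WithLp.toLp 2 ![-(1/8), -(Real.sqrt 3/8)]

def pieceA : Set (EuclideanSpace ℝ (Fin 2)) :=
  regularHexagon ∩ {x | |x 1| ≤ Real.sqrt 3 * x 0}
def pieceB : Set (EuclideanSpace ℝ (Fin 2)) :=
  (regularHexagon ∩ {x | 0 ≤ x 1 ∧ Real.sqrt 3 * x 0 ≤ x 1}) \ pieceA
def pieceC : Set (EuclideanSpace ℝ (Fin 2)) := regularHexagon \ (pieceA ∪ pieceB)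

lemma sqrt316 : Real.sqrt (3/16) = Real.sqrt 3 / 4 := by
  have h : ((Real.sqrt 3 / 4))^2 = 3/16 := by
    rw [div_pow, Real.sq_sqrt] <;> norm_num
  rw [← h, Real.sqrt_sq (by positivity)]

lemma dist_ball_aux (x c : EuclideanSpace ℝ (Fin 2))
    (h : (x 0 - c 0)^2 + (x 1 - c 1)^2 ≤ 3/16) : x ∈ closedBall c (Real.sqrt 3 / 4) := by
  rw [mem_closedBall, ← sqrt316]
  rw [EuclideanSpace.dist_eq]
  apply Real.sqrt_le_sqrt
  simpa [Fin.sum_univ_two, Real.dist_eq, sq_abs] using h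

lemma pieceA_sub : pieceA ⊆ closedBall centerA (Real.sqrt 3 / 4) := by
  rintro x ⟨hx, hs⟩
  rw [mem_hex] at hx
  apply dist_ball_aux
  have := pent hx.1 hx.2.1 hx.2.2 hs
  simpa [centerA] using this

lemma pieceB_sub : pieceB ⊆ closedBall centerB (Real.sqrt 3 / 4) := by
  rintro x ⟨⟨hx, hb⟩, -⟩
  rw [mem_hex] at hx
  obtain ⟨h0, h2, h3⟩ := hx
  set s := Real.sqrt 3 with hsdef
  have hs : s^2 = 3 := Real.sq_sqrt (by norm_num)
  set u := (-(x 0) + s * x 1)/2 with hu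
  set v := (-(s * x 0) - x 1)/2 with hv
  have h1' : |u| ≤ 1/2 := by
    rw [abs_le] at h3 ⊢; constructor <;> simp only [hu] <;> linarith [h3.1, h3.2]
  have h2' : |u + s*v| ≤ 1 := by
    have e : u + s*v = -(2*x 0) := by
      simp only [hu, hv]; linear_combination (-(x 0)/2) * hs
    rw [e, abs_le] at *; constructor <;> linarith [h0.1, h0.2]
  have h3' : |(-u) + s*v| ≤ 1 := by
    have e : (-u) + s*v = -(x 0 + s*x 1) := by
      simp only [hu, hv]; linear_combination (-(x 0)/2) * hs
    rw [e, abs_le] at *; constructor <;> linarith [h2.1, h2.2]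
  have h4' : |v| ≤ s * u := by
    have e4 : s * u = (-(s * x 0) + 3 * x 1)/2 := by
      simp only [hu]; linear_combination (x 1 / 2) * hs
    rw [e4, abs_le]; constructor <;> simp only [hv] <;> linarith [hb.1, hb.2]
  have r := pent h1' h2' h3' h4'
  apply dist_ball_aux
  have hcb0 : centerB 0 = -(1/8) := rfl
  have hcb1 : centerB 1 = s/8 := rfl
  rw [hcb0, hcb1]
  have eq : (x 0 - -(1/8))^2 + (x 1 - s/8)^2 = (u - 1/4)^2 + v^2 := by
    simp only [hu, hv]; linear_combination (1/64 - ((x 0)^2 + (x 1)^2)/4) * hs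
  rw [eq]; exact r

lemma cover {x0 x1 : ℝ} (hA : ¬ |x1| ≤ Real.sqrt 3 * x0)
    (hB : ¬ (0 ≤ x1 ∧ Real.sqrt 3 * x0 ≤ x1)) : x1 ≤ 0 ∧ Real.sqrt 3 * x0 ≤ -x1 := by
  push_neg at hB
  rcases le_total 0 x1 with h|h
  · exact absurd (by rw [abs_of_nonneg h]; linarith [hB h]) hA
  · refine ⟨h, ?_⟩
    rw [abs_of_nonpos h] at hA
    push_neg at hA
    linarith

lemma pieceC_sub : pieceC ⊆ closedBall centerC (Real.sqrt 3 / 4) := by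
  rintro x ⟨hx, hnot⟩
  have hA : ¬ |x 1| ≤ Real.sqrt 3 * x 0 := fun h => hnot (Or.inl ⟨hx, h⟩)
  have hB : ¬ (0 ≤ x 1 ∧ Real.sqrt 3 * x 0 ≤ x 1) :=
    fun h => hnot (Or.inr ⟨⟨hx, h⟩, fun c => hnot (Or.inl c)⟩)
  obtain ⟨hc1, hc2raw⟩ := cover hA hB
  rw [mem_hex] at hx
  obtain ⟨h0, h2, h3⟩ := hx
  set s := Real.sqrt 3 with hsdef
  have hs : s^2 = 3 := Real.sq_sqrt (by norm_num)
  set u := (-(x 0) - s * x 1)/2 with hu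
  set v := (s * x 0 - x 1)/2 with hv
  have h1' : |u| ≤ 1/2 := by
    rw [abs_le] at h2 ⊢; constructor <;> simp only [hu] <;> linarith [h2.1, h2.2]
  have h2' : |u + s*v| ≤ 1 := by
    have e : u + s*v = -(-(x 0) + s*x 1) := by
      simp only [hu, hv]; linear_combination (x 0/2) * hs
    rw [e, abs_le] at *; constructor <;> linarith [h3.1, h3.2]
  have h3' : |(-u) + s*v| ≤ 1 := by
    have e : (-u) + s*v = 2*x 0 := by
      simp only [hu, hv]; linear_combination (x 0/2) * hs
    rw [e, abs_le] at *; constructor <;> linarith [h0.1, h0.2]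
  have h4' : |v| ≤ s * u := by
    have e4 : s * u = (-(s * x 0) - 3 * x 1)/2 := by
      simp only [hu]; linear_combination (-(x 1) / 2) * hs
    rw [e4, abs_le]; constructor <;> simp only [hv] <;> linarith [hc1, hc2raw]
  have r := pent h1' h2' h3' h4'
  apply dist_ball_aux
  have hcb0 : centerC 0 = -(1/8) := rfl
  have hcb1 : centerC 1 = -(s/8) := rfl
  rw [hcb0, hcb1]
  have eq : (x 0 - -(1/8))^2 + (x 1 - -(s/8))^2 = (u - 1/4)^2 + v^2 := by
    simp only [hu, hv]; linear_combination (1/64 - ((x 0)^2 + (x 1)^2)/4) * hs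
  rw [eq]; exact r

lemma hex_union : pieceA ∪ pieceB ∪ pieceC = regularHexagon := by
  rw [pieceC, Set.union_diff_cancel]
  exact Set.union_subset Set.inter_subset_left (Set.diff_subset.trans Set.inter_subset_left)

lemma hex_disjAB : Disjoint pieceA pieceB := disjoint_sdiff_self_right
lemma hex_disjAC : Disjoint pieceA pieceC :=
  Disjoint.mono_left Set.subset_union_left disjoint_sdiff_self_right
lemma hex_disjBC : Disjoint pieceB pieceC :=
  Disjoint.mono_left Set.subset_union_right disjoint_sdiff_self_right
lemma proj_le_dist (p q : EuclideanSpace ℝ (Fin 2)) (ψ : ℝ) :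
    (p 0 - q 0) * Real.cos ψ + (p 1 - q 1) * Real.sin ψ ≤ dist p q := by
  have hd : dist p q = Real.sqrt ((p 0 - q 0)^2 + (p 1 - q 1)^2) := by
    rw [EuclideanSpace.dist_eq]; simp [Fin.sum_univ_two, Real.dist_eq, sq_abs]
  set a := p 0 - q 0
  set b := p 1 - q 1
  rcases le_or_gt (a * Real.cos ψ + b * Real.sin ψ) 0 with h|h
  · exact h.trans (by rw [hd]; positivity)
  · rw [hd]
    have h2 : (a * Real.cos ψ + b * Real.sin ψ)^2 ≤ a^2 + b^2 := by
      nlinarith [Real.sin_sq_add_cos_sq ψ, sq_nonneg (a * Real.sin ψ - b * Real.cos ψ)]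
    nlinarith [Real.sq_sqrt (show (0:ℝ) ≤ a^2+b^2 by positivity),
      Real.sqrt_nonneg (a^2+b^2), h2, h]

lemma part2 (n : ℕ) (P : Finset (EuclideanSpace ℝ (Fin 2))) (hcard : P.card = n)
    (hdiam : ∀ p ∈ P, ∀ q ∈ P, dist p q ≤ 1) :
    ∃ c : EuclideanSpace ℝ (Fin 2),
      ⌈(n : ℝ) / 3⌉₊ ≤ (P.filter (fun p => p ∈ closedBall c (Real.sqrt 3 / 4))).card := by
  rcases P.eq_empty_or_nonempty with rfl|hP
  · refine ⟨0, ?_⟩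
    simp only [Finset.card_empty] at hcard
    subst hcard
    simp
  set k := ⌈(n : ℝ) / 3⌉₊ with hk
  set F : ℝ → ℝ := fun ψ => P.sup' hP (fun p => p 0 * Real.cos ψ + p 1 * Real.sin ψ) with hF
  have hFcont : Continuous F := by
    apply Continuous.finset_sup'_apply hP
    intro p _
    fun_prop
  have hFle : ∀ p ∈ P, ∀ ψ, p 0 * Real.cos ψ + p 1 * Real.sin ψ ≤ F ψ := by
    intro p hp ψ
    exact Finset.le_sup' (fun p => p 0 * Real.cos ψ + p 1 * Real.sin ψ) hp
  have hwidth : ∀ ψ, F ψ + F (ψ + π) ≤ 1 := by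
    intro ψ
    obtain ⟨p, hp, hFp⟩ := Finset.exists_mem_eq_sup' hP (fun p => p 0 * Real.cos ψ + p 1 * Real.sin ψ)
    obtain ⟨q, hq, hFq⟩ := Finset.exists_mem_eq_sup' hP
      (fun p => p 0 * Real.cos (ψ + π) + p 1 * Real.sin (ψ + π))
    have e1 : F ψ = p 0 * Real.cos ψ + p 1 * Real.sin ψ := hFp
    have e2 : F (ψ + π) = q 0 * Real.cos (ψ + π) + q 1 * Real.sin (ψ + π) := hFq
    rw [e1, e2, Real.cos_add_pi, Real.sin_add_pi]
    linarith [proj_le_dist p q ψ, hdiam p hp q hq]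
  have hF2pi : ∀ ψ, F (ψ + 2*π) = F ψ := by
    intro ψ
    apply Finset.sup'_congr hP rfl
    intro p _
    rw [Real.cos_add_two_pi, Real.sin_add_two_pi]
  set G : ℝ → ℝ := fun θ => F θ + F (θ + 2*π/3) + F (θ + 4*π/3) - 3/2 with hG
  have hGcont : Continuous G :=
    (((hFcont).add (hFcont.comp (continuous_add_right _))).add
      (hFcont.comp (continuous_add_right _))).sub continuous_const
  have hGsum : ∀ θ, G θ + G (θ + π/3) ≤ 0 := by
    intro θ
    have h1 := hwidth θ
    have h2 := hwidth (θ + π/3)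
    have h3 := hwidth (θ + 2*π/3)
    simp only [hG]
    rw [show θ + π/3 + 2*π/3 = θ + π by ring, show θ + π/3 + 4*π/3 = θ + 2*π/3 + π by ring]
    rw [show θ + π/3 + π = θ + 4*π/3 by ring] at h2
    linarith
  have hGper : ∀ θ, G (θ + 2*π/3) = G θ := by
    intro θ
    simp only [hG]
    rw [show θ + 2*π/3 + 2*π/3 = θ + 4*π/3 by ring,
      show θ + 2*π/3 + 4*π/3 = θ + 2*π by ring, hF2pi]
    ring
  obtain ⟨θ, hGθ, hGθ'⟩ : ∃ θ, G θ ≤ 0 ∧ G (θ + π/3) ≤ 0 := by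
    set H : ℝ → ℝ := fun θ => G θ - G (θ + π/3) with hH
    have hHcont : Continuous H := hGcont.sub (hGcont.comp (continuous_add_right _))
    have hHflip : H (π/3) = - H 0 := by
      simp only [hH]
      rw [show π/3 + π/3 = 0 + 2*π/3 by ring, hGper]
      ring_nf
    have hle : (0:ℝ) ≤ π/3 := by positivity
    have key : ∀ θ0, H θ0 = 0 → G θ0 ≤ 0 ∧ G (θ0 + π/3) ≤ 0 := by
      intro θ0 h0
      simp only [hH] at h0
      clear_value H G F
      have hsum := hGsum θ0
      constructor <;> linarith
    rcases le_total (H 0) 0 with h|h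
    · obtain ⟨θ0, -, hθ0⟩ := intermediate_value_Icc hle hHcont.continuousOn
        (show (0:ℝ) ∈ Set.Icc (H 0) (H (π/3)) by rw [hHflip]; constructor <;> linarith)
      exact ⟨θ0, key θ0 hθ0⟩
    · obtain ⟨θ0, -, hθ0⟩ := intermediate_value_Icc' hle hHcont.continuousOn
        (show (0:ℝ) ∈ Set.Icc (H (π/3)) (H 0) by rw [hHflip]; constructor <;> linarith)
      exact ⟨θ0, key θ0 hθ0⟩
  set M0 := F θ with hM0
  set M1 := F (θ + π/3) with hM1
  set M2 := F (θ + 2*π/3) with hM2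
  set m0 := -F (θ + π) with hm0
  set m1 := -F (θ + 4*π/3) with hm1
  set m2 := -F (θ + 5*π/3) with hm2
  have hi : M0 + M2 - m1 ≤ 3/2 := by
    simp only [hG] at hGθ
    simp only [hM0, hM2, hm1]
    linarith
  have hii : M1 - m0 - m2 ≤ 3/2 := by
    simp only [hG] at hGθ'
    rw [show θ + π/3 + 2*π/3 = θ + π by ring, show θ + π/3 + 4*π/3 = θ + 5*π/3 by ring] at hGθ'
    simp only [hM1, hm0, hm2]
    linarith
  have hw0 : M0 - m0 ≤ 1 := by have := hwidth θ; simp only [hM0, hm0]; linarith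
  have hw1 : M1 - m1 ≤ 1 := by
    have := hwidth (θ + π/3)
    rw [show θ + π/3 + π = θ + 4*π/3 by ring] at this
    simp only [hM1, hm1]; linarith
  have hw2 : M2 - m2 ≤ 1 := by
    have := hwidth (θ + 2*π/3)
    rw [show θ + 2*π/3 + π = θ + 5*π/3 by ring] at this
    simp only [hM2, hm2]; linarith
  have hub0 : ∀ p ∈ P, p 0 * Real.cos θ + p 1 * Real.sin θ ≤ M0 := fun p hp => hFle p hp θ
  have hub1 : ∀ p ∈ P, p 0 * Real.cos (θ + π/3) + p 1 * Real.sin (θ + π/3) ≤ M1 :=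
    fun p hp => hFle p hp _
  have hub2 : ∀ p ∈ P, p 0 * Real.cos (θ + 2*π/3) + p 1 * Real.sin (θ + 2*π/3) ≤ M2 :=
    fun p hp => hFle p hp _
  have hlb0 : ∀ p ∈ P, m0 ≤ p 0 * Real.cos θ + p 1 * Real.sin θ := by
    intro p hp
    have := hFle p hp (θ + π)
    rw [Real.cos_add_pi, Real.sin_add_pi] at this
    simp only [hm0]; linarith
  have hlb1 : ∀ p ∈ P, m1 ≤ p 0 * Real.cos (θ + π/3) + p 1 * Real.sin (θ + π/3) := by
    intro p hp
    have := hFle p hp (θ + 4*π/3)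
    rw [show θ + 4*π/3 = (θ + π/3) + π by ring, Real.cos_add_pi, Real.sin_add_pi] at this
    simp only [hm1]
    rw [show θ + 4*π/3 = (θ + π/3) + π by ring]
    linarith
  have hlb2 : ∀ p ∈ P, m2 ≤ p 0 * Real.cos (θ + 2*π/3) + p 1 * Real.sin (θ + 2*π/3) := by
    intro p hp
    have := hFle p hp (θ + 5*π/3)
    rw [show θ + 5*π/3 = (θ + 2*π/3) + π by ring, Real.cos_add_pi, Real.sin_add_pi] at this
    simp only [hm2]
    rw [show θ + 5*π/3 = (θ + 2*π/3) + π by ring]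
    linarith
  clear_value M0 M1 M2 m0 m1 m2
  set a := max (M0 - 1/2) (M1 - 1 - m2) with ha
  set c := max (M2 - 1/2) (M1 - 1/2 - a) with hcc
  have haub : a ≤ m0 + 1/2 := max_le (by linarith) (by linarith)
  have halb : M0 - 1/2 ≤ a := le_max_left _ _
  have hclb : M2 - 1/2 ≤ c := le_max_left _ _
  have hcub : c ≤ m2 + 1/2 :=
    max_le (by linarith) (by linarith [le_max_right (M0 - 1/2) (M1 - 1 - m2)])
  have hac_lb : M1 - 1/2 ≤ a + c := by linarith [le_max_right (M2 - 1/2) (M1 - 1/2 - a)]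
  have hac_ub : a + c ≤ m1 + 1/2 := by
    have haux : a ≤ m1 + 1 - M2 := max_le (by linarith) (by linarith)
    rcases max_choice (M2 - 1/2) (M1 - 1/2 - a) with h|h
    · rw [hcc, h]; linarith
    · rw [hcc, h]; linarith
  clear_value a c
  set s3 := Real.sqrt 3 with hs3
  have hs : s3^2 = 3 := Real.sq_sqrt (by norm_num)
  set ct := Real.cos θ with hct
  set st := Real.sin θ with hst
  have pyth : ct^2 + st^2 = 1 := by
    simp only [hct, hst]
    rw [← Real.sin_sq_add_cos_sq θ]; ring
  set t1 := s3 * (a + 2*c) / 3 with ht1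
  set φ : EuclideanSpace ℝ (Fin 2) → EuclideanSpace ℝ (Fin 2) :=
    fun p => WithLp.toLp 2 ![p 0 * ct + p 1 * st - a, -(p 0 * st) + p 1 * ct - t1] with hφ
  have hφ0 : ∀ p, φ p 0 = p 0 * ct + p 1 * st - a := fun p => rfl
  have hφ1 : ∀ p, φ p 1 = -(p 0 * st) + p 1 * ct - t1 := fun p => rfl
  have hc2v : Real.cos (2 * π / 3) = -(1/2) := by
    rw [show (2:ℝ) * π / 3 = π - π/3 by ring, Real.cos_pi_sub, Real.cos_pi_div_three]
  have hs2v : Real.sin (2 * π / 3) = s3 / 2 := by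
    rw [show (2:ℝ) * π / 3 = π - π/3 by ring, Real.sin_pi_sub, Real.sin_pi_div_three]
  have hcos1 : Real.cos (θ + π/3) = ct * (1/2) - st * (s3/2) := by
    rw [Real.cos_add, Real.cos_pi_div_three, Real.sin_pi_div_three]
  have hsin1 : Real.sin (θ + π/3) = st * (1/2) + ct * (s3/2) := by
    rw [Real.sin_add, Real.cos_pi_div_three, Real.sin_pi_div_three]
  have hcos2 : Real.cos (θ + 2*π/3) = ct * (-(1/2)) - st * (s3/2) := by
    rw [Real.cos_add, hc2v, hs2v]
  have hsin2 : Real.sin (θ + 2*π/3) = st * (-(1/2)) + ct * (s3/2) := by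
    rw [Real.sin_add, hc2v, hs2v]
  have hmem : ∀ p ∈ P, φ p ∈ regularHexagon := by
    intro p hp
    rw [mem_hex, hφ0, hφ1]
    refine ⟨?_, ?_, ?_⟩
    · rw [abs_le]
      constructor <;> linarith [hub0 p hp, hlb0 p hp]
    · have e : (p 0 * ct + p 1 * st - a) + s3 * (-(p 0 * st) + p 1 * ct - t1)
          = 2 * ((p 0 * Real.cos (θ + π/3) + p 1 * Real.sin (θ + π/3)) - (a + c)) := by
        rw [hcos1, hsin1, ht1]
        linear_combination (-(a + 2*c)/3) * hs
      rw [e, abs_le]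
      constructor <;> linarith [hub1 p hp, hlb1 p hp]
    · have e : (-(p 0 * ct + p 1 * st - a)) + s3 * (-(p 0 * st) + p 1 * ct - t1)
          = 2 * ((p 0 * Real.cos (θ + 2*π/3) + p 1 * Real.sin (θ + 2*π/3)) - c) := by
        rw [hcos2, hsin2, ht1]
        linear_combination (-(a + 2*c)/3) * hs
      rw [e, abs_le]
      constructor <;> linarith [hub2 p hp, hlb2 p hp]
  have final : ∀ (X : Set (EuclideanSpace ℝ (Fin 2))) (z : EuclideanSpace ℝ (Fin 2)),
      X ⊆ closedBall z (Real.sqrt 3 / 4) →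
      ∀ (pr : EuclideanSpace ℝ (Fin 2) → Prop), (∀ p ∈ P, pr p → φ p ∈ X) →
      k ≤ (P.filter (fun p => pr p)).card →
      ∃ c0 : EuclideanSpace ℝ (Fin 2),
        k ≤ (P.filter (fun p => p ∈ closedBall c0 (Real.sqrt 3 / 4))).card := by
    intro X z hXz pr hpr hkle
    set c' : EuclideanSpace ℝ (Fin 2) :=
      WithLp.toLp 2 ![(z 0 + a) * ct - (z 1 + t1) * st, (z 0 + a) * st + (z 1 + t1) * ct] with hc'
    refine ⟨c', le_trans hkle (Finset.card_le_card ?_)⟩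
    intro p hp
    rw [Finset.mem_filter] at hp ⊢
    refine ⟨hp.1, ?_⟩
    have hmem' := hXz (hpr p hp.1 hp.2)
    rw [mem_closedBall] at hmem' ⊢
    have hd1 : dist (φ p) z = Real.sqrt ((φ p 0 - z 0)^2 + (φ p 1 - z 1)^2) := by
      rw [EuclideanSpace.dist_eq]; simp [Fin.sum_univ_two, Real.dist_eq, sq_abs]
    have hd2 : dist p c' = Real.sqrt ((p 0 - c' 0)^2 + (p 1 - c' 1)^2) := by
      rw [EuclideanSpace.dist_eq]; simp [Fin.sum_univ_two, Real.dist_eq, sq_abs]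
    have ec0 : c' 0 = (z 0 + a) * ct - (z 1 + t1) * st := rfl
    have ec1 : c' 1 = (z 0 + a) * st + (z 1 + t1) * ct := rfl
    have eq : (p 0 - c' 0)^2 + (p 1 - c' 1)^2 = (φ p 0 - z 0)^2 + (φ p 1 - z 1)^2 := by
      rw [ec0, ec1, hφ0, hφ1]
      linear_combination ((z 0 + a)^2 + (z 1 + t1)^2 - (p 0)^2 - (p 1)^2) * pyth
    rw [hd2, eq, ← hd1]
    exact hmem'
  set P1 := P.filter (fun p => φ p ∈ pieceA) with hPP1
  set P2 := P.filter (fun p => φ p ∈ pieceB) with hPP2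
  set P3 := P.filter (fun p => φ p ∈ pieceC) with hPP3
  have hun : P1 ∪ P2 ∪ P3 = P := by
    ext p
    simp only [hPP1, hPP2, hPP3, Finset.mem_union, Finset.mem_filter]
    constructor
    · rintro ((⟨h,-⟩|⟨h,-⟩)|⟨h,-⟩) <;> exact h
    · intro hp
      have hm := hmem p hp
      rw [← hex_union] at hm
      rcases hm with (h|h)|h
      exacts [Or.inl (Or.inl ⟨hp, h⟩), Or.inl (Or.inr ⟨hp, h⟩), Or.inr ⟨hp, h⟩]
  have hd12 : Disjoint P1 P2 := by
    rw [Finset.disjoint_left]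
    intro p h1 h2
    rw [hPP1, Finset.mem_filter] at h1
    rw [hPP2, Finset.mem_filter] at h2
    exact Set.disjoint_left.mp hex_disjAB h1.2 h2.2
  have hd13 : Disjoint P1 P3 := by
    rw [Finset.disjoint_left]
    intro p h1 h2
    rw [hPP1, Finset.mem_filter] at h1
    rw [hPP3, Finset.mem_filter] at h2
    exact Set.disjoint_left.mp hex_disjAC h1.2 h2.2
  have hd23 : Disjoint P2 P3 := by
    rw [Finset.disjoint_left]
    intro p h1 h2
    rw [hPP2, Finset.mem_filter] at h1
    rw [hPP3, Finset.mem_filter] at h2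
    exact Set.disjoint_left.mp hex_disjBC h1.2 h2.2
  have hcards : P1.card + P2.card + P3.card = n := by
    rw [← hcard, ← hun, Finset.card_union_of_disjoint (Finset.disjoint_union_left.mpr ⟨hd13, hd23⟩),
      Finset.card_union_of_disjoint hd12]
  have hmax : k ≤ P1.card ∨ k ≤ P2.card ∨ k ≤ P3.card := by
    by_contra hcon
    push_neg at hcon
    obtain ⟨hc1, hc2, hc3⟩ := hcon
    rcases Nat.eq_zero_or_pos k with h0|hpos
    · omega
    · have hn3 : n ≤ 3 * (k - 1) := by omega
      have : k ≤ k - 1 := by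
        rw [hk]
        apply Nat.ceil_le.mpr
        rw [div_le_iff₀ (by norm_num : (0:ℝ) < 3)]
        calc ((n:ℝ)) ≤ ((3 * (k-1) : ℕ) : ℝ) := by exact_mod_cast hn3
          _ = ((k-1 : ℕ) : ℝ) * 3 := by push_cast; ring
      omega
  rcases hmax with h|h|h
  · exact final pieceA centerA pieceA_sub _ (fun p _ hx => hx) h
  · exact final pieceB centerB pieceB_sub _ (fun p _ hx => hx) h
  · exact final pieceC centerC pieceC_sub _ (fun p _ hx => hx) h

theorem hexagon_partition_and_pigeonhole :
    (∃ A B C : Set (EuclideanSpace ℝ (Fin 2)),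
      A ∪ B ∪ C = regularHexagon ∧ Disjoint A B ∧ Disjoint A C ∧ Disjoint B C ∧
      (∃ a, A ⊆ closedBall a (Real.sqrt 3 / 4)) ∧
      (∃ b, B ⊆ closedBall b (Real.sqrt 3 / 4)) ∧
      (∃ c, C ⊆ closedBall c (Real.sqrt 3 / 4))) ∧
    ∀ (n : ℕ) (P : Finset (EuclideanSpace ℝ (Fin 2))), P.card = n →
      (∀ p ∈ P, ∀ q ∈ P, dist p q ≤ 1) →
      ∃ c : EuclideanSpace ℝ (Fin 2),
        ⌈(n : ℝ) / 3⌉₊ ≤ (P.filter (fun p => p ∈ closedBall c (Real.sqrt 3 / 4))).card := by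
  constructor
  · exact ⟨pieceA, pieceB, pieceC, hex_union, hex_disjAB, hex_disjAC, hex_disjBC,
      ⟨centerA, pieceA_sub⟩, ⟨centerB, pieceB_sub⟩, ⟨centerC, pieceC_sub⟩⟩
  · exact part2
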